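/- Let μ be a Borel probability measure on ℝ, m : ℝ → ℝ Borel measurable with ∫|m| dμ < ∞, let (x,y) ∈ Ω(μ,m) with sup_i |y_i| < ∞, let u ∈ ℝ be an atom of μ (μ({u}) > 0), and let (n_k)_{k≥1} be any sequence of positive integers with n_k → ∞. Then ν̂_{n_k}(π_k[u]) / μ̂_{n_k}(π_k[u]) → ν({u}) / μ({u}) as k → ∞. -/

import Mathlib

open MeasureTheory Filter Set

noncomputable section

/-- Empirical distribution of the first `n` terms of `x`. -/
def muHat (x : ℕ → ℝ) (n : ℕ) (A : Set ℝ) : ℝ :=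
  (∑ i ∈ Finset.range n, A.indicator (fun _ => (1 : ℝ)) (x i)) / n

/-- Joint sample average `ν̂_n(A) = (1/n) ∑_{i=1}^n y_i · 1{x_i ∈ A}`. -/
def nuHat (x y : ℕ → ℝ) (n : ℕ) (A : Set ℝ) : ℝ :=
  (∑ i ∈ Finset.range n, A.indicator (fun _ => y i) (x i)) / n

/-- The signed measure `ν(A) = ∫_A m dμ`. -/
def nuM (μ : Measure ℝ) (m : ℝ → ℝ) (A : Set ℝ) : ℝ := ∫ t in A, m t ∂μ

/-- `(x,y) ∈ Ω(μ,m)`: `x` has limiting distribution `μ` and `(x,y)` has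
limiting regression `m`. -/
def memOmega (μ : Measure ℝ) (m : ℝ → ℝ) (x y : ℕ → ℝ) : Prop :=
  (∀ t : ℝ, Tendsto (fun n => muHat x n (Iic t)) atTop (nhds (μ (Iic t)).toReal)) ∧
  (∀ t : ℝ, Tendsto (fun n => muHat x n {t}) atTop (nhds (μ {t}).toReal)) ∧
  (∀ t : ℝ, Tendsto (fun n => nuHat x y n (Iic t)) atTop (nhds (nuM μ m (Iic t)))) ∧
  (∀ t : ℝ, Tendsto (fun n => nuHat x y n {t}) atTop (nhds (nuM μ m {t})))

/-- `λ`, the uniform distribution on `[0,1]`. -/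
def unifMeasure : Measure ℝ := volume.restrict (Icc 0 1)

/-- For `k ≥ 1`, the cell `π_k[t]` of the dyadic partition `π_k` containing `t`. -/
def dyadCell (k : ℕ) (t : ℝ) : Set ℝ :=
  Ioc (((⌈t * 2 ^ k⌉ : ℝ) - 1) / 2 ^ k) ((⌈t * 2 ^ k⌉ : ℝ) / 2 ^ k)

/-!
The cells `π_k[u]` decrease to `{u}`, so `μ(π_K[u]) ↓ μ({u})`. Each `π_K[u]` is a half-open
interval, hence `μ̂_n(π_K[u]) → μ(π_K[u])`, and for `k ≥ K` we have the sandwich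
`μ̂({u}) ≤ μ̂(π_k[u]) ≤ μ̂(π_K[u])`; thus `μ̂_{n_k}(π_k[u]) → μ({u}) > 0`. Since `|y_i| ≤ C`,
`|ν̂(π_k[u]) - ν̂({u})| ≤ C (μ̂(π_k[u]) - μ̂({u})) → 0`, so the numerator tends to `ν({u})`.
-/
lemma Int.ceil_div_two {K : Type*} [Field K] [LinearOrder K] [IsStrictOrderedRing K] [FloorRing K]
    (a : K) : ⌈a / 2⌉ = -(-⌈a⌉ / 2) := by
  have h := Int.floor_div_natCast (-a) 2
  rw [Int.floor_neg, Nat.cast_ofNat, neg_div, Int.floor_neg] at h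
  omega

lemma mem_dyadCell_iff {k : ℕ} {s t : ℝ} : s ∈ dyadCell k t ↔ ⌈s * 2 ^ k⌉ = ⌈t * 2 ^ k⌉ := by
  rw [Int.ceil_eq_iff, dyadCell, mem_Ioc, div_lt_iff₀ (by positivity), le_div_iff₀ (by positivity)]

lemma mem_dyadCell (k : ℕ) (t : ℝ) : t ∈ dyadCell k t := mem_dyadCell_iff.2 rfl

lemma dyadCell_antitone (t : ℝ) : Antitone (dyadCell · t) := by
  refine antitone_nat_of_succ_le fun k s hs => ?_
  have halve (r : ℝ) : r * 2 ^ k = r * 2 ^ (k + 1) / 2 := by ring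
  rw [mem_dyadCell_iff] at hs ⊢
  rw [halve s, halve t, Int.ceil_div_two, Int.ceil_div_two, hs]

lemma abs_sub_lt_of_mem_dyadCell {k : ℕ} {s t : ℝ} (hs : s ∈ dyadCell k t) :
    |s - t| < (1 / 2) ^ k := by
  rw [mem_dyadCell_iff, ← neg_inj, ← Int.floor_neg, ← Int.floor_neg] at hs
  have h := Int.abs_sub_lt_one_of_floor_eq_floor hs
  rw [← neg_mul, ← neg_mul, ← sub_mul, abs_mul, neg_sub_neg, abs_sub_comm,
    abs_of_pos (by positivity : (0 : ℝ) < 2 ^ k)] at h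
  rwa [one_div_pow, lt_div_iff₀ (by positivity)]

lemma iInter_dyadCell (t : ℝ) : ⋂ k, dyadCell k t = {t} := by
  refine Subset.antisymm (fun s hs => ?_) (singleton_subset_iff.2 (mem_iInter.2 (mem_dyadCell · t)))
  have hlim := tendsto_pow_atTop_nhds_zero_of_lt_one (by norm_num : (0:ℝ) ≤ 1 / 2) (by norm_num)
  have h := ge_of_tendsto' hlim fun k => (abs_sub_lt_of_mem_dyadCell (mem_iInter.1 hs k)).le
  exact sub_eq_zero.1 (abs_nonpos_iff.1 h)

lemma muHat_mono (x : ℕ → ℝ) (n : ℕ) {A B : Set ℝ} (h : A ⊆ B) :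
    muHat x n A ≤ muHat x n B := by
  unfold muHat
  gcongr

lemma muHat_diff (x : ℕ → ℝ) (n : ℕ) {A B : Set ℝ} (h : A ⊆ B) :
    muHat x n (B \ A) = muHat x n B - muHat x n A := by
  simp only [muHat, indicator_sdiff h, Pi.sub_apply, Finset.sum_sub_distrib, sub_div]

lemma nuHat_diff (x y : ℕ → ℝ) (n : ℕ) {A B : Set ℝ} (h : A ⊆ B) :
    nuHat x y n (B \ A) = nuHat x y n B - nuHat x y n A := by
  simp only [nuHat, indicator_sdiff h, Pi.sub_apply, Finset.sum_sub_distrib, sub_div]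

lemma abs_nuHat_le {y : ℕ → ℝ} {C : ℝ} (hC : ∀ i, |y i| ≤ C) (x : ℕ → ℝ) (n : ℕ) (A : Set ℝ) :
    |nuHat x y n A| ≤ C * muHat x n A := by
  unfold nuHat muHat
  rw [abs_div, Nat.abs_cast, mul_div_assoc', Finset.mul_sum]
  gcongr
  refine (Finset.abs_sum_le_sum_abs _ _).trans (Finset.sum_le_sum fun i _ => ?_)
  by_cases hi : x i ∈ A <;> simp [hi, hC i]

lemma tendsto_muHat_Ioc {x : ℕ → ℝ} {μ : Measure ℝ} [IsFiniteMeasure μ]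
    (hx : ∀ t, Tendsto (fun n => muHat x n (Iic t)) atTop (nhds (μ (Iic t)).toReal))
    {a b : ℝ} (hab : a ≤ b) :
    Tendsto (fun n => muHat x n (Ioc a b)) atTop (nhds (μ (Ioc a b)).toReal) := by
  have hsub : Iic a ⊆ Iic b := Iic_subset_Iic.2 hab
  simp only [← Iic_sdiff_Iic, muHat_diff x _ hsub, ← measureReal_def] at hx ⊢
  rw [measureReal_sdiff (μ := μ) hsub measurableSet_Iic]
  exact (hx b).sub (hx a)

lemma tendsto_muHat_of_antitone {x : ℕ → ℝ} {μ : Measure ℝ} [IsFiniteMeasure μ] {N : ℕ → ℕ}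
    {A : ℕ → Set ℝ} (hA : Antitone A) (hAm : ∀ k, MeasurableSet (A k))
    (hAK : ∀ K, Tendsto (fun k => muHat x (N k) (A K)) atTop (nhds (μ (A K)).toReal))
    (hInter : Tendsto (fun k => muHat x (N k) (⋂ K, A K)) atTop (nhds (μ (⋂ K, A K)).toReal)) :
    Tendsto (fun k => muHat x (N k) (A k)) atTop (nhds (μ (⋂ K, A K)).toReal) := by
  have hμA : Tendsto (fun K => (μ (A K)).toReal) atTop (nhds (μ (⋂ K, A K)).toReal) :=
    (ENNReal.tendsto_toReal (measure_ne_top _ _)).comp <|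
      tendsto_measure_iInter_atTop (fun k => (hAm k).nullMeasurableSet) hA ⟨0, measure_ne_top _ _⟩
  refine tendsto_order.2 ⟨fun a ha => ?_, fun b hb => ?_⟩
  · filter_upwards [hInter.eventually_const_lt ha] with k hk
    exact hk.trans_le (muHat_mono _ _ (iInter_subset _ k))
  · obtain ⟨K, hK⟩ := (hμA.eventually_lt_const hb).exists
    filter_upwards [(hAK K).eventually_lt_const hK, eventually_ge_atTop K] with k hk hKk
    exact (muHat_mono _ _ (hA hKk)).trans_lt hk

lemma tendsto_nuHat_of_subset {x y : ℕ → ℝ} {C : ℝ} (hC : ∀ i, |y i| ≤ C) {N : ℕ → ℕ}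
    {A : ℕ → Set ℝ} {B : Set ℝ} (hBA : ∀ k, B ⊆ A k) {l : ℝ}
    (hνB : Tendsto (fun k => nuHat x y (N k) B) atTop (nhds l))
    (hμ : Tendsto (fun k => muHat x (N k) (A k) - muHat x (N k) B) atTop (nhds 0)) :
    Tendsto (fun k => nuHat x y (N k) (A k)) atTop (nhds l) := by
  have hgap : Tendsto (fun k => nuHat x y (N k) (A k) - nuHat x y (N k) B) atTop (nhds 0) := by
    refine squeeze_zero_norm (fun k => ?_) (by simpa using hμ.const_mul C)
    rw [Real.norm_eq_abs, ← nuHat_diff _ _ _ (hBA k), ← muHat_diff _ _ (hBA k)]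
    exact abs_nuHat_le hC _ _ _
  simpa using hgap.add hνB

theorem ratio_tendsto_at_atom_general
    (μ : Measure ℝ) [IsProbabilityMeasure μ]
    (m : ℝ → ℝ)
    (x y : ℕ → ℝ) (hxy : memOmega μ m x y)
    (hy : ∃ C : ℝ, ∀ i : ℕ, |y i| ≤ C)
    (u : ℝ) (hu : 0 < μ {u})
    (n : ℕ → ℕ) (hn : Tendsto n atTop atTop) :
    Tendsto (fun k => nuHat x y (n k) (dyadCell k u) / muHat x (n k) (dyadCell k u))
      atTop (nhds (nuM μ m {u} / (μ {u}).toReal)) := by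
  obtain ⟨hIic, hsing, -, hsingNu⟩ := hxy
  obtain ⟨C, hC⟩ := hy
  have hμcell : Tendsto (fun k => muHat x (n k) (dyadCell k u)) atTop (nhds (μ {u}).toReal) := by
    have hcell (K : ℕ) : Tendsto (fun k => muHat x (n k) (dyadCell K u)) atTop
        (nhds (μ (dyadCell K u)).toReal) :=
      (tendsto_muHat_Ioc hIic (by gcongr; exact sub_le_self _ zero_le_one)).comp hn
    have h := tendsto_muHat_of_antitone (dyadCell_antitone u) (fun _ => measurableSet_Ioc) hcell
      (by rw [iInter_dyadCell]; exact (hsing u).comp hn)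
    rwa [iInter_dyadCell] at h
  have hνcell := tendsto_nuHat_of_subset hC (fun k => singleton_subset_iff.2 (mem_dyadCell k u))
    ((hsingNu u).comp hn) (by simpa using hμcell.sub ((hsing u).comp hn))
  exact hνcell.div hμcell (ENNReal.toReal_pos hu.ne' (measure_ne_top μ _)).ne'

/-- For a stable pair `(x,y) ∈ Ω(μ,m)` with bounded `y`, an atom `u` of `μ`,
and any sequence `n_k → ∞` of positive integers,
`ν̂_{n_k}(π_k[u]) / μ̂_{n_k}(π_k[u]) → ν({u}) / μ({u})` as `k → ∞`. -/
theorem ratio_tendsto_at_atom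
    (μ : Measure ℝ) [IsProbabilityMeasure μ]
    (m : ℝ → ℝ) (hmMeas : Measurable m) (hmInt : Integrable m μ)
    (x y : ℕ → ℝ) (hxy : memOmega μ m x y)
    (hy : ∃ C : ℝ, ∀ i : ℕ, |y i| ≤ C)
    (u : ℝ) (hu : 0 < μ {u})
    (n : ℕ → ℕ) (hpos : ∀ k, 1 ≤ n k) (hn : Tendsto n atTop atTop) :
    Tendsto (fun k => nuHat x y (n k) (dyadCell k u) / muHat x (n k) (dyadCell k u))
      atTop (nhds (nuM μ m {u} / (μ {u}).toReal)) :=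
  ratio_tendsto_at_atom_general μ m x y hxy hy u hu n hn
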